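/- arXiv:0711.0041 — 2 statements merged into one kernel-verified Lean document; each statement's English description precedes it below -/
import Mathlib

section
/- Let m > 0 and ω ∈ ℝ with ω² < m², and set κ = √(m² − ω²). Suppose φ : ℝ → ℂ is continuous on ℝ, square-integrable over ℝ, and for every x ≠ 0 the function φ is twice differentiable at x with φ''(x) = κ²·φ(x). Then there exists C ∈ ℂ such that φ(x) = C·e^{−κ·|x|} for all x ∈ ℝ. -/
/-!
On each half-line the equation `φ'' = κ² φ` is solved by integrating factors:
`(φ' + κφ) e^{-κx}` and `(φ' - κφ) e^{κx}` are constant, so `φ = A e^{κx} + B e^{-κx}` there.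
Square-integrability at infinity forces the coefficient of the growing exponential to vanish,
continuity at `0` identifies the other one with `φ 0`, and the negative half-line reduces to the
positive one through `x ↦ φ (-x)`.
-/

open MeasureTheory Set Filter Complex

theorem HasDerivAt.comp_neg {𝕜 F : Type*} [NontriviallyNormedField 𝕜] [NormedAddCommGroup F]
    [NormedSpace 𝕜 F] {f : 𝕜 → F} {f' : F} {x : 𝕜} (hf : HasDerivAt f f' (-x)) :
    HasDerivAt (fun y => f (-y)) (-f') x :=
  (hf.scomp x (hasDerivAt_neg x)).congr_deriv (by simp)

lemma hasDerivAt_cexp_mul_ofReal (a : ℂ) (x : ℝ) :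
    HasDerivAt (fun y : ℝ => cexp (a * y)) (a * cexp (a * x)) x := by
  simpa [mul_comm] using (((hasDerivAt_id x).ofReal_comp).const_mul a).cexp

lemma exists_eq_mul_cexp_add_mul_cexp {s : Set ℝ} (hs : IsOpen s) (hs' : IsPreconnected s)
    {k : ℂ} (hk : k ≠ 0) {f f' : ℝ → ℂ}
    (hf : ∀ x ∈ s, HasDerivAt f (f' x) x) (hf' : ∀ x ∈ s, HasDerivAt f' (k ^ 2 * f x) x) :
    ∃ A B : ℂ, ∀ x ∈ s, f x = A * cexp (k * x) + B * cexp (-k * x) := by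
  have const_of_deriv_zero (w : ℝ → ℂ) (hw : ∀ x ∈ s, HasDerivAt w 0 x) :
      ∃ c, ∀ x ∈ s, w x = c :=
    hs.exists_is_const_of_deriv_eq_zero hs'
      (fun x hx => (hw x hx).differentiableAt.differentiableWithinAt)
      (fun x hx => (hw x hx).deriv)
  obtain ⟨c₁, hc₁⟩ := const_of_deriv_zero (fun x => (f' x + k * f x) * cexp (-k * x))
    fun x hx =>
      (((hf' x hx).add ((hf x hx).const_mul k)).mul
        (hasDerivAt_cexp_mul_ofReal (-k) x)).congr_deriv (by simp only [Pi.add_apply]; ring)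
  obtain ⟨c₂, hc₂⟩ := const_of_deriv_zero (fun x => (f' x - k * f x) * cexp (k * x))
    fun x hx =>
      (((hf' x hx).sub ((hf x hx).const_mul k)).mul
        (hasDerivAt_cexp_mul_ofReal k x)).congr_deriv (by simp only [Pi.sub_apply]; ring)
  refine ⟨c₁ / (2 * k), -c₂ / (2 * k), fun x hx => ?_⟩
  have hexp : cexp (k * x) * cexp (-k * x) = 1 := by rw [← Complex.exp_add]; simp
  rw [div_mul_eq_mul_div, div_mul_eq_mul_div, ← add_div,
    eq_div_iff (mul_ne_zero two_ne_zero hk)]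
  linear_combination cexp (k * x) * hc₁ x hx - cexp (-k * x) * hc₂ x hx - 2 * k * f x * hexp

lemma MeasureTheory.Integrable.not_tendsto_atTop {g : ℝ → ℝ} (hg : Integrable g) :
    ¬Tendsto g atTop atTop := by
  intro h
  obtain ⟨b, hb⟩ := (h.eventually_ge_atTop 1).exists_forall_of_atTop
  have hsub : Ici b ⊆ {x | 1 ≤ ‖g x‖} := fun x hx => (hb x hx).trans (le_abs_self _)
  have := (measure_mono hsub).trans_lt (hg.measure_norm_ge_lt_top one_pos)
  simp at this

lemma eq_zero_of_integrable_norm_sq {κ : ℝ} (hκ : 0 < κ) {f : ℝ → ℂ} {A B : ℂ}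
    (hf : ∀ᶠ x in atTop, f x = A * cexp (κ * x) + B * cexp (-κ * x))
    (hL2 : Integrable (fun x => ‖f x‖ ^ 2)) : A = 0 := by
  by_contra hA
  have hgrow : Tendsto (fun x : ℝ => ‖A‖ * Real.exp (κ * x) - ‖B‖) atTop atTop :=
    tendsto_atTop_add_const_right _ _ <| (Real.tendsto_exp_atTop.comp
      (tendsto_id.const_mul_atTop hκ)).const_mul_atTop (norm_pos_iff.2 hA)
  refine hL2.not_tendsto_atTop ((tendsto_pow_atTop two_ne_zero).comp
    (tendsto_atTop_mono' _ ?_ hgrow))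
  filter_upwards [hf, eventually_ge_atTop 0] with x hfx hx
  have hdecay : ‖B * cexp (-κ * x)‖ ≤ ‖B‖ := by
    rw [norm_mul, norm_exp]
    refine mul_le_of_le_one_right (norm_nonneg B) (Real.exp_le_one_iff.2 ?_)
    simpa using mul_nonneg hκ.le hx
  calc ‖A‖ * Real.exp (κ * x) - ‖B‖
      ≤ ‖A * cexp (κ * x)‖ - ‖B * cexp (-κ * x)‖ := by
        have hgrowth : ‖A * cexp (κ * x)‖ = ‖A‖ * Real.exp (κ * x) := by
          rw [norm_mul, norm_exp]; norm_cast
        linarith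
    _ ≤ ‖f x‖ := by rw [hfx]; exact norm_sub_le_norm_add _ _

lemma forall_nonneg_eq_mul_cexp_neg {κ : ℝ} (hκ : 0 < κ) {f f' : ℝ → ℂ} (hcont : Continuous f)
    (hL2 : Integrable (fun x => ‖f x‖ ^ 2))
    (hf : ∀ x > 0, HasDerivAt f (f' x) x) (hf' : ∀ x > 0, HasDerivAt f' (κ ^ 2 * f x) x) :
    ∀ x ≥ 0, f x = f 0 * cexp (-κ * x) := by
  obtain ⟨A, B, hAB⟩ := exists_eq_mul_cexp_add_mul_cexp isOpen_Ioi isPreconnected_Ioi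
    (ofReal_ne_zero.2 hκ.ne') hf hf'
  obtain rfl : A = 0 :=
    eq_zero_of_integrable_norm_sq hκ (eventually_gt_atTop 0 |>.mono hAB) hL2
  have hEq : EqOn f (fun x => B * cexp (-κ * x)) (Ici 0) :=
    EqOn.of_subset_closure (fun x hx => by simpa using hAB x hx) hcont.continuousOn
      (by fun_prop) Ioi_subset_Ici_self (closure_Ioi (0 : ℝ)).ge
  intro x hx
  rw [hEq hx, hEq self_mem_Ici]
  simp

theorem solitary_wave_profile_general
    (m ω : ℝ) (hω : ω ^ 2 < m ^ 2)
    (κ : ℝ) (hκ : κ = Real.sqrt (m ^ 2 - ω ^ 2))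
    (φ : ℝ → ℂ) (hcont : Continuous φ)
    (hL2 : MeasureTheory.Integrable (fun x : ℝ => ‖φ x‖ ^ 2))
    (hODE : ∀ x : ℝ, x ≠ 0 →
      DifferentiableAt ℝ φ x ∧ DifferentiableAt ℝ (deriv φ) x ∧
      deriv (deriv φ) x = ((κ ^ 2 : ℝ) : ℂ) * φ x) :
    ∃ C : ℂ, ∀ x : ℝ, φ x = C * Complex.exp (-((κ * |x| : ℝ) : ℂ)) := by
  have hκ0 : 0 < κ := hκ ▸ Real.sqrt_pos.2 (by linarith)
  have hφ (x : ℝ) (hx : x ≠ 0) : HasDerivAt φ (deriv φ x) x := (hODE x hx).1.hasDerivAt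
  have hφ' (x : ℝ) (hx : x ≠ 0) : HasDerivAt (deriv φ) (κ ^ 2 * φ x) x := by
    obtain ⟨-, hd, h⟩ := hODE x hx
    exact hd.hasDerivAt.congr_deriv (by exact_mod_cast h)
  have hright := forall_nonneg_eq_mul_cexp_neg hκ0 hcont hL2
    (fun x hx => hφ x hx.ne') (fun x hx => hφ' x hx.ne')
  have hleft := forall_nonneg_eq_mul_cexp_neg hκ0 (f := fun x => φ (-x))
    (f' := fun x => -deriv φ (-x)) (hcont.comp continuous_neg) hL2.comp_neg
    (fun x hx => (hφ (-x) (by simpa using hx.ne')).comp_neg)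
    (fun x hx => (hφ' (-x) (by simpa using hx.ne')).comp_neg.fun_neg.congr_deriv (neg_neg _))
  refine ⟨φ 0, fun x => ?_⟩
  rcases le_total 0 x with hx | hx
  · simpa [abs_of_nonneg hx] using hright x hx
  · simpa [abs_of_nonpos hx] using hleft (-x) (neg_nonneg.2 hx)

/-- Characterization of solitary-wave profiles for `|ω| < m`: a continuous,
square-integrable `φ : ℝ → ℂ` satisfying `φ'' = κ²·φ` away from the origin,
with `κ = √(m² − ω²)`, is of the form `φ(x) = C·e^{−κ|x|}`. -/
theorem solitary_wave_profile
    (m ω : ℝ) (hm : 0 < m) (hω : ω ^ 2 < m ^ 2)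
    (κ : ℝ) (hκ : κ = Real.sqrt (m ^ 2 - ω ^ 2))
    (φ : ℝ → ℂ) (hcont : Continuous φ)
    (hL2 : MeasureTheory.Integrable (fun x : ℝ => ‖φ x‖ ^ 2))
    (hODE : ∀ x : ℝ, x ≠ 0 →
      DifferentiableAt ℝ φ x ∧ DifferentiableAt ℝ (deriv φ) x ∧
      deriv (deriv φ) x = ((κ ^ 2 : ℝ) : ℂ) * φ x) :
    ∃ C : ℂ, ∀ x : ℝ, φ x = C * Complex.exp (-((κ * |x| : ℝ) : ℂ)) :=
  solitary_wave_profile_general m ω hω κ hκ φ hcont hL2 hODE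
end

section
/- Let m > 0 and δ > 0. Then there exists ε₀ > 0 such that for all ω ∈ ℝ with |ω| > m + δ, all ε ∈ (0, ε₀), and every k ∈ ℂ with k² = (ω + iε)² − m² and Im k > 0, one has ε·∫_ℝ |e^{i·k·|x|}|² dx ≥ √(ω² − m²)/(2|ω|) (equivalently, ε/Im k ≥ √(ω² − m²)/(2|ω|)). -/
/-!
Since `|e^{ik|x|}|² = e^{-2 Im k |x|}`, the weighted norm equals `ε / Im k`. The imaginary part
of `k² = (ω + iε)² - m²` gives `Re k · Im k = ωε`, so `ε / Im k = |Re k| / |ω|`; its real part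
gives `(Re k)² ≥ ω² - m² - ε²`, which is at least `(ω² - m²) / 4` once `ε < δ / 2`.
-/

open MeasureTheory

theorem integral_exp_neg_mul_abs {b : ℝ} (hb : 0 < b) :
    ∫ x : ℝ, Real.exp (-(b * |x|)) = 2 / b := by
  rw [integral_comp_abs (f := fun x => Real.exp (-(b * x))),
    integral_comp_mul_left_Ioi (fun x => Real.exp (-x)) 0 hb, mul_zero,
    integral_exp_neg_Ioi_zero, smul_eq_mul]
  field_simp

theorem Complex.norm_exp_I_mul_mul_ofReal_sq (k : ℂ) (t : ℝ) :
    ‖exp (I * k * t)‖ ^ 2 = Real.exp (-(2 * k.im * t)) := by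
  rw [norm_exp, ← Real.exp_nat_mul]
  simp only [Nat.cast_ofNat, mul_re, I_re, zero_mul, I_im, one_mul, zero_sub, ofReal_re, neg_mul,
    mul_im, zero_add, ofReal_im, mul_zero, sub_zero, mul_neg, Real.exp_eq_exp, neg_inj]
  ring

theorem integral_norm_exp_I_mul_mul_abs_sq {k : ℂ} (hk : 0 < k.im) :
    ∫ x : ℝ, ‖Complex.exp (Complex.I * k * ((|x| : ℝ) : ℂ))‖ ^ 2 = 1 / k.im := by
  simp only [Complex.norm_exp_I_mul_mul_ofReal_sq,
    integral_exp_neg_mul_abs (by positivity : 0 < 2 * k.im)]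
  field_simp

section SquareRoot

variable {ω ε m : ℝ} {k : ℂ}

theorem re_sq_sub_im_sq_of_sq_eq (hk : k ^ 2 = ((ω : ℂ) + Complex.I * ε) ^ 2 - (m : ℂ) ^ 2) :
    k.re ^ 2 - k.im ^ 2 = ω ^ 2 - ε ^ 2 - m ^ 2 := by
  have hre := congrArg Complex.re hk
  simp only [sq, Complex.mul_re, Complex.mul_im, Complex.add_re, Complex.add_im, Complex.sub_re,
    Complex.ofReal_re, Complex.ofReal_im, Complex.I_re, Complex.I_im] at hre
  linear_combination hre

theorem re_mul_im_of_sq_eq (hk : k ^ 2 = ((ω : ℂ) + Complex.I * ε) ^ 2 - (m : ℂ) ^ 2) :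
    k.re * k.im = ω * ε := by
  have him := congrArg Complex.im hk
  simp only [sq, Complex.mul_re, Complex.mul_im, Complex.add_re, Complex.add_im, Complex.sub_im,
    Complex.ofReal_re, Complex.ofReal_im, Complex.I_re, Complex.I_im] at him
  linear_combination him / 2

theorem div_im_eq_abs_re_div_abs_of_sq_eq
    (hk : k ^ 2 = ((ω : ℂ) + Complex.I * ε) ^ 2 - (m : ℂ) ^ 2)
    (hε : 0 < ε) (hkim : 0 < k.im) (hω : ω ≠ 0) : ε / k.im = |k.re| / |ω| := by
  have h : |k.re| * k.im = |ω| * ε := by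
    rw [← abs_of_pos hkim, ← abs_mul, re_mul_im_of_sq_eq hk, abs_mul, abs_of_pos hε]
  field_simp
  linarith

theorem sqrt_le_two_mul_abs_re_of_sq_eq
    (hk : k ^ 2 = ((ω : ℂ) + Complex.I * ε) ^ 2 - (m : ℂ) ^ 2)
    (hε : 4 * ε ^ 2 ≤ 3 * (ω ^ 2 - m ^ 2)) : √(ω ^ 2 - m ^ 2) ≤ 2 * |k.re| := by
  rw [← Real.sqrt_sq (by positivity : 0 ≤ 2 * |k.re|)]
  apply Real.sqrt_le_sqrt
  nlinarith [re_sq_sub_im_sq_of_sq_eq hk, sq_abs k.re, sq_nonneg k.im]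

end SquareRoot

/-- Part (ii) of the key lemma of the Paley–Wiener argument: for every `δ > 0`
there is `ε₀ > 0` such that for all `|ω| > m + δ`, all `ε ∈ (0, ε₀)`, and every
root `k` of `k² = (ω+iε)² − m²` with `Im k > 0`, one has
`ε·∫_ℝ |e^{ik|x|}|² dx ≥ √(ω² − m²)/(2|ω|)`. -/
theorem uniform_lower_bound_weighted_L2_norm
    (m δ : ℝ) (hm : 0 < m) (hδ : 0 < δ) :
    ∃ ε₀ : ℝ, 0 < ε₀ ∧
      ∀ ω : ℝ, m + δ < |ω| → ∀ ε : ℝ, 0 < ε → ε < ε₀ →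
        ∀ k : ℂ, k ^ 2 = ((ω : ℂ) + Complex.I * (ε : ℂ)) ^ 2 - (m : ℂ) ^ 2 → 0 < k.im →
          Real.sqrt (ω ^ 2 - m ^ 2) / (2 * |ω|) ≤
            ε * ∫ x : ℝ, ‖Complex.exp (Complex.I * k * ((|x| : ℝ) : ℂ))‖ ^ 2 := by
  refine ⟨δ / 2, by positivity, fun ω hω ε hε hεδ k hk hkim => ?_⟩
  have hωpos : 0 < |ω| := by linarith
  have hgap : δ ^ 2 < ω ^ 2 - m ^ 2 := by nlinarith [sq_abs ω]
  have hεsmall : 4 * ε ^ 2 ≤ 3 * (ω ^ 2 - m ^ 2) := by nlinarith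
  rw [integral_norm_exp_I_mul_mul_abs_sq hkim, mul_one_div,
    div_im_eq_abs_re_div_abs_of_sq_eq hk hε hkim (abs_pos.mp hωpos)]
  calc √(ω ^ 2 - m ^ 2) / (2 * |ω|) ≤ 2 * |k.re| / (2 * |ω|) := by
        gcongr; exact sqrt_le_two_mul_abs_re_of_sq_eq hk hεsmall
    _ = |k.re| / |ω| := mul_div_mul_left _ _ two_ne_zero
end
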